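/- Let q be a prime power, d ≥ 1 an integer, and let E ⊆ F_q^d be a Sidon set. Then for every real p ∈ [1,∞), (1/2)·q^d·‖Ê‖_{2p}² − q^{−d}·#E ≤ ‖(E+E)^∧‖_p ≤ q^{−d}·#E + (1/2)·q^d·‖Ê‖_{2p}², where E + E = { x + y : x, y ∈ E } is the sumset and all Fourier transforms and norms are taken in F_q^d. -/

import Mathlib

open Finset

/-- The Fourier transform of (the indicator of) a set `E ⊆ F_q^d`:
`Ê(x) = q^{-d} ∑_{y ∈ E} χ(-x·y)`. -/
noncomputable def fourierTransform {F : Type} [Field F] [Fintype F] [DecidableEq F] {d : ℕ}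
    (χ : AddChar F ℂ) (E : Finset (Fin d → F)) (x : Fin d → F) : ℂ :=
  ((Fintype.card F : ℂ) ^ d)⁻¹ * ∑ y ∈ E, χ (-(∑ i, x i * y i))

/-- `‖Ê‖_p = ( q^{-d} ∑_{x ≠ 0} |Ê(x)|^p )^{1/p}`. -/
noncomputable def lpNorm {F : Type} [Field F] [Fintype F] [DecidableEq F] {d : ℕ}
    (χ : AddChar F ℂ) (E : Finset (Fin d → F)) (p : ℝ) : ℝ :=
  (((Fintype.card F : ℝ) ^ d)⁻¹ *
      ∑ x ∈ Finset.univ.filter (fun x : Fin d → F => x ≠ 0),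
        ‖fourierTransform χ E x‖ ^ p) ^ (1 / p)

/-!
For a Sidon set `E`, every `y ∈ E + E` has exactly two ordered representations `y = a + b`,
except the doubles `y = a + a`, which have one. Squaring the exponential sum of `E` therefore gives
`q^d Ê² = 2 (E+E)^ - D^`, where `D` is the set of doubles, and `|D^| ≤ q^{-d} #E`. So
`(E+E)^` and `(q^d/2) Ê²` are pointwise within `q^{-d} #E` of each other; by Minkowski's inequality
(the total weight `q^{-d} #{x ≠ 0}` being at most `1`) so are their `L^p` norms, and the `L^p`
norm of `Ê²` is `‖Ê‖_{2p}²`.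
-/

open scoped Pointwise

def IsSidon {G : Type*} [Add G] (E : Finset G) : Prop :=
  ∀ a ∈ E, ∀ b ∈ E, ∀ c ∈ E, ∀ e ∈ E, a + b = c + e → (a = c ∧ b = e) ∨ (a = e ∧ b = c)

section Sidon

variable {G : Type*} [AddCommMonoid G] [DecidableEq G] {E : Finset G}

lemma IsSidon.card_filter_add_eq (hE : IsSidon E) {y : G} (hy : y ∈ E + E) :
    #{z ∈ E ×ˢ E | z.1 + z.2 = y} = if y ∈ E.image (fun a => a + a) then 1 else 2 := by
  obtain ⟨u, hu, v, hv, rfl⟩ := mem_add.1 hy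
  have hfiber : {z ∈ E ×ˢ E | z.1 + z.2 = u + v} = {(u, v), (v, u)} := by
    ext ⟨a, b⟩
    simp only [mem_filter, mem_product, mem_insert, mem_singleton, Prod.mk.injEq]
    constructor
    · rintro ⟨⟨ha, hb⟩, hab⟩
      exact hE a ha b hb u hu v hv hab
    · rintro (⟨rfl, rfl⟩ | ⟨rfl, rfl⟩)
      exacts [⟨⟨hu, hv⟩, rfl⟩, ⟨⟨hv, hu⟩, add_comm _ _⟩]
  rw [hfiber]
  by_cases huv : u = v
  · subst huv
    rw [if_pos (mem_image_of_mem _ hu), insert_eq_of_mem (mem_singleton_self _), card_singleton]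
  · have hdouble : u + v ∉ E.image (fun a => a + a) := by
      simp only [mem_image, not_exists, not_and]
      intro a ha haa
      obtain ⟨rfl, rfl⟩ | ⟨rfl, rfl⟩ := hE a ha a ha u hu v hv haa <;> exact huv rfl
    rw [if_neg hdouble, card_pair (by simp [huv])]

lemma IsSidon.sum_product_add {R : Type*} [AddCommGroup R] (hE : IsSidon E) (f : G → R) :
    ∑ z ∈ E ×ˢ E, f (z.1 + z.2) =
      2 • ∑ y ∈ E + E, f y - ∑ y ∈ E.image (fun a => a + a), f y := by
  have hdouble : E.image (fun a => a + a) ⊆ E + E := by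
    intro y hy
    obtain ⟨a, ha, rfl⟩ := mem_image.1 hy
    exact add_mem_add ha ha
  refine (sum_comp f (fun z : G × G => z.1 + z.2)).trans ?_
  rw [← add_def, ← inter_eq_right.2 hdouble, ← sum_ite_mem, smul_sum, ← sum_sub_distrib]
  refine sum_congr rfl fun y hy => ?_
  rw [hE.card_filter_add_eq hy]
  split_ifs <;> simp [two_nsmul]

lemma IsSidon.sum_addChar_sq {R : Type*} [CommRing R] (hE : IsSidon E) (ψ : AddChar G R) :
    (∑ a ∈ E, ψ a) ^ 2 = 2 * ∑ y ∈ E + E, ψ y - ∑ y ∈ E.image (fun a => a + a), ψ y := by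
  rw [sq, sum_mul_sum, ← sum_product', two_mul, ← two_nsmul, ← hE.sum_product_add]
  simp only [AddChar.map_add_eq_mul]

end Sidon

noncomputable def weightedLpNorm {ι V : Type*} [SeminormedAddCommGroup V] (w : ℝ) (X : Finset ι)
    (f : ι → V) (p : ℝ) : ℝ :=
  (w * ∑ x ∈ X, ‖f x‖ ^ p) ^ (1 / p)

section WeightedLpNorm

variable {ι V : Type*} [SeminormedAddCommGroup V] {w : ℝ} (X : Finset ι) {p : ℝ}

lemma weightedLpNorm_eq_mul (hw : 0 ≤ w) (f : ι → V) :
    weightedLpNorm w X f p = w ^ (1 / p) * (∑ x ∈ X, ‖f x‖ ^ p) ^ (1 / p) :=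
  Real.mul_rpow hw (sum_nonneg fun _ _ => by positivity)

lemma weightedLpNorm_le_add (hw : 0 ≤ w) (hp : 1 ≤ p) {c : ℝ} (hc : 0 ≤ c) {f g : ι → V}
    (hfg : ∀ x ∈ X, ‖f x - g x‖ ≤ c) :
    weightedLpNorm w X f p ≤ weightedLpNorm w X g p + c * (w * #X) ^ (1 / p) := by
  have hp0 : 0 < p := zero_lt_one.trans_le hp
  have hminkowski : (∑ x ∈ X, ‖f x‖ ^ p) ^ (1 / p) ≤
      (∑ x ∈ X, ‖g x‖ ^ p) ^ (1 / p) + c * (#X : ℝ) ^ (1 / p) :=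
    calc (∑ x ∈ X, ‖f x‖ ^ p) ^ (1 / p)
        ≤ (∑ x ∈ X, (‖g x‖ + c) ^ p) ^ (1 / p) := by
          gcongr with x hx
          exact (norm_le_norm_add_norm_sub' _ _).trans (by linarith [hfg x hx])
      _ ≤ (∑ x ∈ X, ‖g x‖ ^ p) ^ (1 / p) + (∑ _x ∈ X, c ^ p) ^ (1 / p) :=
          Real.Lp_add_le_of_nonneg X hp (fun _ _ => norm_nonneg _) (fun _ _ => hc)
      _ = (∑ x ∈ X, ‖g x‖ ^ p) ^ (1 / p) + c * (#X : ℝ) ^ (1 / p) := by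
          rw [sum_const, nsmul_eq_mul, Real.mul_rpow (by positivity) (by positivity), one_div,
            Real.rpow_rpow_inv hc hp0.ne', mul_comm]
  rw [weightedLpNorm_eq_mul X hw, weightedLpNorm_eq_mul X hw, Real.mul_rpow hw (by positivity)]
  calc w ^ (1 / p) * (∑ x ∈ X, ‖f x‖ ^ p) ^ (1 / p)
      ≤ w ^ (1 / p) * ((∑ x ∈ X, ‖g x‖ ^ p) ^ (1 / p) + c * (#X : ℝ) ^ (1 / p)) := by gcongr
    _ = _ := by ring

lemma abs_weightedLpNorm_sub_le (hw : 0 ≤ w) (hp : 1 ≤ p) {c : ℝ} (hc : 0 ≤ c) {f g : ι → V}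
    (hfg : ∀ x ∈ X, ‖f x - g x‖ ≤ c) :
    |weightedLpNorm w X f p - weightedLpNorm w X g p| ≤ c * (w * #X) ^ (1 / p) := by
  have hgf : ∀ x ∈ X, ‖g x - f x‖ ≤ c := fun x hx => norm_sub_rev (f x) (g x) ▸ hfg x hx
  rw [abs_sub_le_iff]
  constructor
  · linarith [weightedLpNorm_le_add X hw hp hc hfg]
  · linarith [weightedLpNorm_le_add X hw hp hc hgf]

lemma weightedLpNorm_smul {𝕜 : Type*} [NormedField 𝕜] [NormedSpace 𝕜 V] (hw : 0 ≤ w)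
    (hp : p ≠ 0) (a : 𝕜) (f : ι → V) :
    weightedLpNorm w X (fun x => a • f x) p = ‖a‖ * weightedLpNorm w X f p := by
  have hsum : 0 ≤ w * ∑ x ∈ X, ‖f x‖ ^ p := mul_nonneg hw (sum_nonneg fun _ _ => by positivity)
  simp only [weightedLpNorm, norm_smul, Real.mul_rpow (norm_nonneg _) (norm_nonneg _), ← mul_sum,
    mul_left_comm w]
  rw [Real.mul_rpow (by positivity) hsum, one_div, Real.rpow_rpow_inv (norm_nonneg _) hp]

lemma weightedLpNorm_pow {𝕜 : Type*} [NormedDivisionRing 𝕜] (hw : 0 ≤ w) (hp : p ≠ 0) {n : ℕ}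
    (hn : n ≠ 0) (f : ι → 𝕜) :
    weightedLpNorm w X (fun x => f x ^ n) p = weightedLpNorm w X f (n * p) ^ n := by
  have hsum : 0 ≤ w * ∑ x ∈ X, ‖f x‖ ^ ((n : ℝ) * p) :=
    mul_nonneg hw (sum_nonneg fun _ _ => by positivity)
  simp only [weightedLpNorm, norm_pow, ← Real.rpow_natCast, ← Real.rpow_mul (norm_nonneg _)]
  rw [← Real.rpow_mul hsum]
  congr 1
  field_simp

end WeightedLpNorm

section Fourier

variable {F : Type} [Field F] [Fintype F] [DecidableEq F] {d : ℕ} (χ : AddChar F ℂ)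

def dotChar (x : Fin d → F) : AddChar (Fin d → F) ℂ :=
  χ.compAddMonoidHom <| AddMonoidHom.mk' (fun y => -∑ i, x i * y i) fun a b => by
    simp only [Pi.add_apply, mul_add, sum_add_distrib, neg_add]

lemma fourierTransform_eq_sum_dotChar (E : Finset (Fin d → F)) (x : Fin d → F) :
    fourierTransform χ E x = ((Fintype.card F : ℂ) ^ d)⁻¹ * ∑ y ∈ E, dotChar χ x y :=
  rfl

lemma norm_fourierTransform_le (E : Finset (Fin d → F)) (x : Fin d → F) :
    ‖fourierTransform χ E x‖ ≤ ((Fintype.card F : ℝ) ^ d)⁻¹ * #E := by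
  rw [fourierTransform_eq_sum_dotChar, norm_mul, norm_inv, norm_pow, Complex.norm_natCast]
  gcongr
  simpa using norm_sum_le E (dotChar χ x)

lemma IsSidon.two_mul_fourierTransform_add {E : Finset (Fin d → F)} (hE : IsSidon E)
    (x : Fin d → F) :
    2 * fourierTransform χ (E + E) x = (Fintype.card F : ℂ) ^ d * fourierTransform χ E x ^ 2 +
      fourierTransform χ (E.image fun a => a + a) x := by
  simp only [fourierTransform_eq_sum_dotChar, mul_pow, hE.sum_addChar_sq]
  field_simp
  ring

lemma IsSidon.norm_fourierTransform_add_sub_le {E : Finset (Fin d → F)} (hE : IsSidon E)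
    (x : Fin d → F) :
    ‖fourierTransform χ (E + E) x - ((Fintype.card F : ℂ) ^ d / 2) • fourierTransform χ E x ^ 2‖
      ≤ ((Fintype.card F : ℝ) ^ d)⁻¹ * #E := by
  have hdiff : fourierTransform χ (E + E) x - ((Fintype.card F : ℂ) ^ d / 2) •
      fourierTransform χ E x ^ 2 = fourierTransform χ (E.image fun a => a + a) x / 2 := by
    rw [smul_eq_mul, eq_div_iff two_ne_zero, sub_mul, mul_comm _ (2 : ℂ),
      hE.two_mul_fourierTransform_add]
    ring
  have hcard : (#(E.image fun a => a + a) : ℝ) ≤ #E := by exact_mod_cast card_image_le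
  rw [hdiff, norm_div, Complex.norm_two]
  calc ‖fourierTransform χ (E.image fun a => a + a) x‖ / 2
      ≤ ((Fintype.card F : ℝ) ^ d)⁻¹ * #E / 2 := by
        gcongr
        exact (norm_fourierTransform_le χ _ x).trans (by gcongr)
    _ ≤ ((Fintype.card F : ℝ) ^ d)⁻¹ * #E := by
        linarith [show 0 ≤ ((Fintype.card F : ℝ) ^ d)⁻¹ * #E by positivity]

lemma lpNorm_eq_weightedLpNorm (E : Finset (Fin d → F)) (p : ℝ) :
    lpNorm χ E p = weightedLpNorm ((Fintype.card F : ℝ) ^ d)⁻¹ {x | x ≠ 0}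
      (fourierTransform χ E) p :=
  rfl

end Fourier

theorem sidon_sumset_lp_general {F : Type} [Field F] [Fintype F] [DecidableEq F] {d : ℕ}
    (χ : AddChar F ℂ)
    (E : Finset (Fin d → F))
    (hSidon : ∀ a ∈ E, ∀ b ∈ E, ∀ c ∈ E, ∀ e ∈ E,
      a + b = c + e → (a = c ∧ b = e) ∨ (a = e ∧ b = c))
    (p : ℝ) (hp : 1 ≤ p) :
    (1 / 2) * (Fintype.card F : ℝ) ^ d * lpNorm χ E (2 * p) ^ 2 -
        ((Fintype.card F : ℝ) ^ d)⁻¹ * (E.card : ℝ) ≤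
      lpNorm χ ((E ×ˢ E).image fun z : (Fin d → F) × (Fin d → F) => z.1 + z.2) p ∧
    lpNorm χ ((E ×ˢ E).image fun z : (Fin d → F) × (Fin d → F) => z.1 + z.2) p ≤
      ((Fintype.card F : ℝ) ^ d)⁻¹ * (E.card : ℝ) +
        (1 / 2) * (Fintype.card F : ℝ) ^ d * lpNorm χ E (2 * p) ^ 2 := by
  set N : ℝ := (Fintype.card F : ℝ) ^ d
  have hN : 0 < N := by positivity
  have hweight : (N⁻¹ * #({x | x ≠ 0} : Finset (Fin d → F))) ^ (1 / p) ≤ 1 := by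
    refine Real.rpow_le_one (by positivity) ?_ (by positivity)
    rw [inv_mul_le_one₀ hN]
    have hcard := card_le_univ ({x | x ≠ 0} : Finset (Fin d → F))
    rw [Fintype.card_fun, Fintype.card_fin] at hcard
    simpa only [N, Nat.cast_pow] using (Nat.cast_le (α := ℝ)).2 hcard
  have hsquare : (1 / 2) * N * lpNorm χ E (2 * p) ^ 2 = weightedLpNorm N⁻¹ {x | x ≠ 0}
      (fun x => ((Fintype.card F : ℂ) ^ d / 2) • fourierTransform χ E x ^ 2) p := by
    rw [weightedLpNorm_smul _ (by positivity) (by positivity),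
      weightedLpNorm_pow _ (by positivity) (by positivity) two_ne_zero, lpNorm_eq_weightedLpNorm]
    push_cast
    rw [norm_div, norm_pow, Complex.norm_natCast, Complex.norm_two]
    ring
  have hclose : |lpNorm χ (E + E) p - (1 / 2) * N * lpNorm χ E (2 * p) ^ 2| ≤ N⁻¹ * #E := by
    rw [hsquare, lpNorm_eq_weightedLpNorm]
    exact (abs_weightedLpNorm_sub_le _ (by positivity) hp (by positivity)
      fun x _ => IsSidon.norm_fourierTransform_add_sub_le χ hSidon x).trans
      (mul_le_of_le_one_right (by positivity) hweight)
  rw [← add_def]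
  obtain ⟨hle, hge⟩ := abs_sub_le_iff.1 hclose
  constructor <;> linarith

/-- For a Sidon set `E ⊆ F_q^d` and any `p ∈ [1,∞)`:
`(1/2) q^d ‖Ê‖_{2p}² - q^{-d} #E ≤ ‖(E+E)^∧‖_p ≤ q^{-d} #E + (1/2) q^d ‖Ê‖_{2p}²`. -/
theorem sidon_sumset_lp {F : Type} [Field F] [Fintype F] [DecidableEq F] {d : ℕ}
    (hd : 1 ≤ d) (χ : AddChar F ℂ) (hχ : ∃ a, χ a ≠ 1)
    (E : Finset (Fin d → F))
    (hSidon : ∀ a ∈ E, ∀ b ∈ E, ∀ c ∈ E, ∀ e ∈ E,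
      a + b = c + e → (a = c ∧ b = e) ∨ (a = e ∧ b = c))
    (p : ℝ) (hp : 1 ≤ p) :
    (1 / 2) * (Fintype.card F : ℝ) ^ d * lpNorm χ E (2 * p) ^ 2 -
        ((Fintype.card F : ℝ) ^ d)⁻¹ * (E.card : ℝ) ≤
      lpNorm χ ((E ×ˢ E).image fun z : (Fin d → F) × (Fin d → F) => z.1 + z.2) p ∧
    lpNorm χ ((E ×ˢ E).image fun z : (Fin d → F) × (Fin d → F) => z.1 + z.2) p ≤
      ((Fintype.card F : ℝ) ^ d)⁻¹ * (E.card : ℝ) +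
        (1 / 2) * (Fintype.card F : ℝ) ^ d * lpNorm χ E (2 * p) ^ 2 :=
  sidon_sumset_lp_general χ E hSidon p hp
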